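/- arXiv:1906.05556 — 6 statements merged into one kernel-verified Lean document; each statement's English description precedes it below -/
import Mathlib

section
/- Consider the algebraic equilibrium system of the Coxian distributed SEIR model with constant contact rate: real numbers S*, E_n*, ..., E_1*, I*, R* satisfying μ − β̄·S*·I* − μ·S* = 0, β̄·S*·I* − (λ_n+μ)·E_n* = 0, p̄_i·λ_{i+1}·E_{i+1}* − (λ_i+μ)·E_i* = 0 for i = n−1,...,1, Σ_{i=0}^{n−1} p_i·λ_{i+1}·E_{i+1}* − (γ+μ)·I* = 0, and γ·I* − μ·R* = 0. This system has a solution with all of S*, E_n*, ..., E_1*, I*, R* strictly positive if and only if R_0 > 1, and in that case the positive solution is unique, given by S* = 1/R_0 and I* = (μ/β̄)·(R_0 − 1). -/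
/-!
Solving the chain equations backwards from `E n` gives `E i = c i * E n`, where `c i` is the
product of the stage ratios `(1 - p j) * λ (j + 1) / (λ j + μ)` for `i ≤ j < n`. The
`I`-equation then reads `G * E n = (γ + μ) * I` with `G = ∑ p i * λ (i + 1) * c (i + 1)`, and
after reindexing the products in `R0` one has `R0 = β G / ((γ + μ) (λ n + μ))`. Together with
`β S I = (λ n + μ) E n` this forces `R0 S = 1`, and the `S`-equation gives
`I = μ / β * (R0 - 1)`, so a positive equilibrium needs `R0 > 1`. Conversely, for `R0 > 1`
these formulas define a positive equilibrium.
-/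

/-- The algebraic equilibrium system of the Coxian distributed SEIR model
with constant contact rate `β`. -/
def CoxianEquilib (n : ℕ) (μ γ β : ℝ) (lam p : ℕ → ℝ)
    (S : ℝ) (E : ℕ → ℝ) (I R : ℝ) : Prop :=
  μ - β * S * I - μ * S = 0 ∧
  β * S * I - (lam n + μ) * E n = 0 ∧
  (∀ i, 1 ≤ i → i ≤ n - 1 → (1 - p i) * lam (i + 1) * E (i + 1) - (lam i + μ) * E i = 0) ∧
  (∑ i ∈ Finset.range n, p i * lam (i + 1) * E (i + 1)) - (γ + μ) * I = 0 ∧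
  γ * I - μ * R = 0

/-- All components of an equilibrium are strictly positive. -/
def CoxianPos (n : ℕ) (S : ℝ) (E : ℕ → ℝ) (I R : ℝ) : Prop :=
  0 < S ∧ (∀ i, 1 ≤ i → i ≤ n → 0 < E i) ∧ 0 < I ∧ 0 < R


open Finset

theorem mul_prod_Ico_succ_eq_prod_Ico_mul {M : Type*} [CommMonoid M] (f : ℕ → M) {a b : ℕ}
    (hab : a ≤ b) : f a * ∏ j ∈ Ico a b, f (j + 1) = (∏ j ∈ Ico a b, f j) * f b := by
  rw [prod_Ico_add', ← prod_eq_prod_Ico_succ_bot (Nat.lt_succ_of_le hab), prod_Ico_succ_top hab]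

noncomputable def coxianGain (n : ℕ) (μ : ℝ) (lam p : ℕ → ℝ) (i : ℕ) : ℝ :=
  ∏ j ∈ Ico i n, (1 - p j) * lam (j + 1) / (lam j + μ)

noncomputable def coxianExitRate (n : ℕ) (μ : ℝ) (lam p : ℕ → ℝ) : ℝ :=
  ∑ i ∈ range n, p i * lam (i + 1) * coxianGain n μ lam p (i + 1)

noncomputable def coxianR0 (n : ℕ) (μ γ β : ℝ) (lam p : ℕ → ℝ) : ℝ :=
  β / (γ + μ) * ∑ i ∈ range n,
    (p i * ∏ j ∈ Icc 1 (n - 1 - i), (1 - p (j + i))) *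
      ∏ k ∈ Icc 1 (n - i), lam (n + 1 - k) / (lam (n + 1 - k) + μ)

section

variable {n : ℕ} {μ γ β : ℝ} {lam p : ℕ → ℝ}

theorem coxianGain_self : coxianGain n μ lam p n = 1 := by
  simp [coxianGain]

theorem coxianGain_of_lt {i : ℕ} (hi : i < n) :
    coxianGain n μ lam p i = (1 - p i) * lam (i + 1) / (lam i + μ) * coxianGain n μ lam p (i + 1) :=
  prod_eq_prod_Ico_succ_bot hi _

theorem coxianGain_pos (hμ : 0 < μ) (hlam : ∀ i, 1 ≤ i → i ≤ n → 0 < lam i)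
    (hp : ∀ i, 1 ≤ i → i < n → p i < 1) {i : ℕ} (hi : 1 ≤ i) : 0 < coxianGain n μ lam p i :=
  prod_pos fun j hj => by
    obtain ⟨hij, hjn⟩ := mem_Ico.1 hj
    exact div_pos (mul_pos (sub_pos.2 (hp j (by omega) hjn)) (hlam (j + 1) (by omega) hjn))
      (add_pos (hlam j (by omega) hjn.le) hμ)

theorem coxianR0_summand_eq {i : ℕ} (hi : i < n) :
    (p i * ∏ j ∈ Icc 1 (n - 1 - i), (1 - p (j + i))) *
        ∏ k ∈ Icc 1 (n - i), lam (n + 1 - k) / (lam (n + 1 - k) + μ)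
      = p i * lam (i + 1) * coxianGain n μ lam p (i + 1) / (lam n + μ) := by
  have hsurv : ∏ j ∈ Icc 1 (n - 1 - i), (1 - p (j + i)) = ∏ j ∈ Ico (i + 1) n, (1 - p j) := by
    rw [← Ico_add_one_right_eq_Icc, prod_Ico_add' (fun j => 1 - p j)]
    congr 2 <;> omega
  have hstages : ∏ k ∈ Icc 1 (n - i), lam (n + 1 - k) / (lam (n + 1 - k) + μ)
      = ∏ j ∈ Ico (i + 1) (n + 1), lam j / (lam j + μ) := by
    rw [← Ico_add_one_right_eq_Icc, prod_Ico_reflect (fun j => lam j / (lam j + μ)) 1 (by omega)]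
    congr 2; omega
  have hin : i + 1 ≤ n := hi
  rw [hsurv, hstages, coxianGain]
  simp only [prod_div_distrib, prod_mul_distrib]
  rw [prod_Ico_succ_top hin, prod_Ico_succ_top hin, ← mul_prod_Ico_succ_eq_prod_Ico_mul lam hin,
    div_eq_mul_inv, mul_inv]
  ring

theorem coxianR0_eq :
    coxianR0 n μ γ β lam p = β / (γ + μ) * (coxianExitRate n μ lam p / (lam n + μ)) := by
  rw [coxianR0, coxianExitRate, sum_div]
  exact congrArg _ (sum_congr rfl fun i hi => coxianR0_summand_eq (mem_range.1 hi))

end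

namespace CoxianEquilib

variable {n : ℕ} {μ γ β : ℝ} {lam p : ℕ → ℝ} {S I R : ℝ} {E : ℕ → ℝ}

theorem eq_coxianGain_mul (he : CoxianEquilib n μ γ β lam p S E I R)
    (hden : ∀ i, 1 ≤ i → i < n → lam i + μ ≠ 0) {i : ℕ} (hi : 1 ≤ i) (hin : i ≤ n) :
    E i = coxianGain n μ lam p i * E n := by
  induction hin using Nat.decreasingInduction with
  | self => rw [coxianGain_self, one_mul]
  | of_succ k hk ih =>
    have hchain := he.2.2.1 k hi (by omega)
    rw [coxianGain_of_lt hk, mul_assoc, ← ih (by omega), div_mul_eq_mul_div,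
      eq_div_iff (hden k hi hk)]
    linear_combination -hchain

theorem coxianExitRate_mul (he : CoxianEquilib n μ γ β lam p S E I R)
    (hden : ∀ i, 1 ≤ i → i < n → lam i + μ ≠ 0) :
    coxianExitRate n μ lam p * E n = (γ + μ) * I := by
  rw [coxianExitRate, sum_mul, ← sub_eq_zero.1 he.2.2.2.1]
  refine sum_congr rfl fun i hi => ?_
  rw [he.eq_coxianGain_mul hden (by omega) (mem_range.1 hi), mul_assoc]

theorem coxianR0_mul_eq_one (he : CoxianEquilib n μ γ β lam p S E I R)
    (hpos : CoxianPos n S E I R) (hn : 1 ≤ n) (hμ : 0 < μ) (hγ : 0 < γ)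
    (hlam : ∀ i, 1 ≤ i → i ≤ n → 0 < lam i) :
    coxianR0 n μ γ β lam p * S = 1 := by
  have hden : ∀ i, 1 ≤ i → i ≤ n → lam i + μ ≠ 0 := fun i h1 h2 => (add_pos (hlam i h1 h2) hμ).ne'
  have hexit := he.coxianExitRate_mul fun i h1 h2 => hden i h1 h2.le
  have hinf : β * S * I = (lam n + μ) * E n := sub_eq_zero.1 he.2.1
  have hγμ : γ + μ ≠ 0 := (add_pos hγ hμ).ne'
  have hlamn := hden n hn le_rfl
  refine mul_right_cancel₀ hpos.2.2.1.ne' ?_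
  rw [coxianR0_eq]
  field_simp
  linear_combination (lam n + μ) * hexit + coxianExitRate n μ lam p * hinf

theorem eq_one_div_coxianR0 (he : CoxianEquilib n μ γ β lam p S E I R)
    (hpos : CoxianPos n S E I R) (hn : 1 ≤ n) (hμ : 0 < μ) (hγ : 0 < γ)
    (hlam : ∀ i, 1 ≤ i → i ≤ n → 0 < lam i) : S = 1 / coxianR0 n μ γ β lam p :=
  eq_one_div_of_mul_eq_one_right (he.coxianR0_mul_eq_one hpos hn hμ hγ hlam)

theorem eq_infected (he : CoxianEquilib n μ γ β lam p S E I R)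
    (hpos : CoxianPos n S E I R) (hn : 1 ≤ n) (hμ : 0 < μ) (hγ : 0 < γ) (hβ : 0 < β)
    (hlam : ∀ i, 1 ≤ i → i ≤ n → 0 < lam i) : I = μ / β * (coxianR0 n μ γ β lam p - 1) := by
  have key := he.coxianR0_mul_eq_one hpos hn hμ hγ hlam
  rw [div_mul_eq_mul_div, eq_div_iff hβ.ne']
  linear_combination (-coxianR0 n μ γ β lam p) * he.1 + (-(β * I) - μ) * key

theorem one_lt_coxianR0 (he : CoxianEquilib n μ γ β lam p S E I R)
    (hpos : CoxianPos n S E I R) (hn : 1 ≤ n) (hμ : 0 < μ) (hγ : 0 < γ) (hβ : 0 < β)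
    (hlam : ∀ i, 1 ≤ i → i ≤ n → 0 < lam i) : 1 < coxianR0 n μ γ β lam p := by
  have hI := hpos.2.2.1
  rw [he.eq_infected hpos hn hμ hγ hβ hlam] at hI
  exact sub_pos.1 (pos_of_mul_pos_right hI (div_pos hμ hβ).le)

theorem eq_recovered (he : CoxianEquilib n μ γ β lam p S E I R) (hμ : 0 < μ) : R = γ / μ * I := by
  rw [div_mul_eq_mul_div, eq_div_iff hμ.ne']
  linear_combination -he.2.2.2.2

theorem eq_exposed (he : CoxianEquilib n μ γ β lam p S E I R) (hμ : 0 < μ)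
    (hlam : ∀ i, 1 ≤ i → i ≤ n → 0 < lam i) {i : ℕ} (hi : 1 ≤ i) (hin : i ≤ n) :
    E i = coxianGain n μ lam p i * (β * S * I / (lam n + μ)) := by
  have hden : ∀ i, 1 ≤ i → i ≤ n → lam i + μ ≠ 0 := fun i h1 h2 => (add_pos (hlam i h1 h2) hμ).ne'
  rw [he.eq_coxianGain_mul (fun i h1 h2 => hden i h1 h2.le) hi hin]
  congr 1
  rw [eq_div_iff (hden n (hi.trans hin) le_rfl)]
  linear_combination -he.2.1

theorem eq_of_coxianPos {S₁ S₂ I₁ I₂ R₁ R₂ : ℝ} {E₁ E₂ : ℕ → ℝ}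
    (he₁ : CoxianEquilib n μ γ β lam p S₁ E₁ I₁ R₁) (hpos₁ : CoxianPos n S₁ E₁ I₁ R₁)
    (he₂ : CoxianEquilib n μ γ β lam p S₂ E₂ I₂ R₂) (hpos₂ : CoxianPos n S₂ E₂ I₂ R₂)
    (hn : 1 ≤ n) (hμ : 0 < μ) (hγ : 0 < γ) (hβ : 0 < β) (hlam : ∀ i, 1 ≤ i → i ≤ n → 0 < lam i) :
    S₁ = S₂ ∧ I₁ = I₂ ∧ R₁ = R₂ ∧ ∀ i, 1 ≤ i → i ≤ n → E₁ i = E₂ i := by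
  have hS : S₁ = S₂ := (he₁.eq_one_div_coxianR0 hpos₁ hn hμ hγ hlam).trans
    (he₂.eq_one_div_coxianR0 hpos₂ hn hμ hγ hlam).symm
  have hI : I₁ = I₂ := (he₁.eq_infected hpos₁ hn hμ hγ hβ hlam).trans
    (he₂.eq_infected hpos₂ hn hμ hγ hβ hlam).symm
  refine ⟨hS, hI, by rw [he₁.eq_recovered hμ, he₂.eq_recovered hμ, hI], fun i hi hin => ?_⟩
  rw [he₁.eq_exposed hμ hlam hi hin, he₂.eq_exposed hμ hlam hi hin, hS, hI]

end CoxianEquilib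

theorem exists_coxianEquilib_coxianPos {n : ℕ} {μ γ β : ℝ} {lam p : ℕ → ℝ}
    (hn : 1 ≤ n) (hμ : 0 < μ) (hγ : 0 < γ) (hβ : 0 < β) (hlam : ∀ i, 1 ≤ i → i ≤ n → 0 < lam i)
    (hp : ∀ i, 1 ≤ i → i < n → p i < 1) (hR0 : 1 < coxianR0 n μ γ β lam p) :
    ∃ (S : ℝ) (E : ℕ → ℝ) (I R : ℝ),
      CoxianEquilib n μ γ β lam p S E I R ∧ CoxianPos n S E I R := by
  set R0 := coxianR0 n μ γ β lam p with hR0_def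
  have hden : ∀ i, 1 ≤ i → i ≤ n → lam i + μ ≠ 0 := fun i h1 h2 => (add_pos (hlam i h1 h2) hμ).ne'
  have hlamn := hden n hn le_rfl
  have hexit : coxianExitRate n μ lam p * β = R0 * ((γ + μ) * (lam n + μ)) := by
    rw [hR0_def, coxianR0_eq]
    field_simp
  have hR0pos : 0 < R0 := one_pos.trans hR0
  have hI : 0 < μ / β * (R0 - 1) := mul_pos (div_pos hμ hβ) (sub_pos.2 hR0)
  have hEn : 0 < μ * (R0 - 1) / R0 / (lam n + μ) :=
    div_pos (div_pos (mul_pos hμ (sub_pos.2 hR0)) hR0pos) (add_pos (hlam n hn le_rfl) hμ)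
  refine ⟨1 / R0, fun i => coxianGain n μ lam p i * (μ * (R0 - 1) / R0 / (lam n + μ)),
    μ / β * (R0 - 1), γ / μ * (μ / β * (R0 - 1)), ⟨?_, ?_, ?_, ?_, ?_⟩,
    by positivity, fun i hi _ => mul_pos (coxianGain_pos hμ hlam hp hi) hEn, hI,
    mul_pos (div_pos hγ hμ) hI⟩
  · field_simp
    ring
  · dsimp only
    rw [coxianGain_self]
    field_simp
    ring
  · intro i hi hin
    dsimp only
    rw [coxianGain_of_lt (by omega : i < n)]
    field_simp [hden i hi (by omega)]
    ring
  · simp only [← mul_assoc]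
    rw [← sum_mul, ← coxianExitRate]
    field_simp
    linear_combination μ * (R0 - 1) * hexit
  · field_simp
    ring

theorem coxian_seir_endemic_equilibrium_iff_general
    (n : ℕ) (hn : 1 ≤ n) (μ γ β : ℝ) (hμ : 0 < μ) (hγ : 0 < γ) (hβ : 0 < β)
    (lam p : ℕ → ℝ) (hlam : ∀ i, 1 ≤ i → i ≤ n → 0 < lam i)
    (hp : ∀ i, 1 ≤ i → i ≤ n - 1 → 0 < p i ∧ p i < 1)
    (R0 : ℝ)
    (hR0 : R0 = β / (γ + μ) * ∑ i ∈ Finset.range n,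
      (p i * ∏ j ∈ Finset.Icc 1 (n - 1 - i), (1 - p (j + i))) *
        ∏ k ∈ Finset.Icc 1 (n - i), lam (n + 1 - k) / (lam (n + 1 - k) + μ)) :
    ((∃ (S : ℝ) (E : ℕ → ℝ) (I R : ℝ),
        CoxianEquilib n μ γ β lam p S E I R ∧ CoxianPos n S E I R) ↔ 1 < R0) ∧
    (∀ (S : ℝ) (E : ℕ → ℝ) (I R : ℝ),
        CoxianEquilib n μ γ β lam p S E I R → CoxianPos n S E I R →
        S = 1 / R0 ∧ I = μ / β * (R0 - 1)) ∧
    (∀ (S₁ : ℝ) (E₁ : ℕ → ℝ) (I₁ R₁ : ℝ) (S₂ : ℝ) (E₂ : ℕ → ℝ) (I₂ R₂ : ℝ),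
        CoxianEquilib n μ γ β lam p S₁ E₁ I₁ R₁ → CoxianPos n S₁ E₁ I₁ R₁ →
        CoxianEquilib n μ γ β lam p S₂ E₂ I₂ R₂ → CoxianPos n S₂ E₂ I₂ R₂ →
        S₁ = S₂ ∧ I₁ = I₂ ∧ R₁ = R₂ ∧ ∀ i, 1 ≤ i → i ≤ n → E₁ i = E₂ i) := by
  obtain rfl : R0 = coxianR0 n μ γ β lam p := hR0
  have hp_lt_one : ∀ i, 1 ≤ i → i < n → p i < 1 := fun i hi hin => (hp i hi (by omega)).2
  refine ⟨⟨fun ⟨_, _, _, _, he, hpos⟩ => he.one_lt_coxianR0 hpos hn hμ hγ hβ hlam,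
      exists_coxianEquilib_coxianPos hn hμ hγ hβ hlam hp_lt_one⟩,
    fun _ _ _ _ he hpos => ⟨he.eq_one_div_coxianR0 hpos hn hμ hγ hlam,
      he.eq_infected hpos hn hμ hγ hβ hlam⟩,
    fun _ _ _ _ _ _ _ _ he₁ hpos₁ he₂ hpos₂ =>
      he₁.eq_of_coxianPos hpos₁ he₂ hpos₂ hn hμ hγ hβ hlam⟩

/-- The Coxian distributed SEIR model has a strictly positive (endemic)
equilibrium iff `R0 > 1`; in that case it is unique, with `S* = 1/R0` and
`I* = (μ/β)·(R0 − 1)`. -/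
theorem coxian_seir_endemic_equilibrium_iff
    (n : ℕ) (hn : 1 ≤ n) (μ γ β : ℝ) (hμ : 0 < μ) (hγ : 0 < γ) (hβ : 0 < β)
    (lam p : ℕ → ℝ) (hlam : ∀ i, 1 ≤ i → i ≤ n → 0 < lam i)
    (hp0 : p 0 = 1) (hp : ∀ i, 1 ≤ i → i ≤ n - 1 → 0 < p i ∧ p i < 1)
    (R0 : ℝ)
    (hR0 : R0 = β / (γ + μ) * ∑ i ∈ Finset.range n,
      (p i * ∏ j ∈ Finset.Icc 1 (n - 1 - i), (1 - p (j + i))) *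
        ∏ k ∈ Finset.Icc 1 (n - i), lam (n + 1 - k) / (lam (n + 1 - k) + μ)) :
    ((∃ (S : ℝ) (E : ℕ → ℝ) (I R : ℝ),
        CoxianEquilib n μ γ β lam p S E I R ∧ CoxianPos n S E I R) ↔ 1 < R0) ∧
    (∀ (S : ℝ) (E : ℕ → ℝ) (I R : ℝ),
        CoxianEquilib n μ γ β lam p S E I R → CoxianPos n S E I R →
        S = 1 / R0 ∧ I = μ / β * (R0 - 1)) ∧
    (∀ (S₁ : ℝ) (E₁ : ℕ → ℝ) (I₁ R₁ : ℝ) (S₂ : ℝ) (E₂ : ℕ → ℝ) (I₂ R₂ : ℝ),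
        CoxianEquilib n μ γ β lam p S₁ E₁ I₁ R₁ → CoxianPos n S₁ E₁ I₁ R₁ →
        CoxianEquilib n μ γ β lam p S₂ E₂ I₂ R₂ → CoxianPos n S₂ E₂ I₂ R₂ →
        S₁ = S₂ ∧ I₁ = I₂ ∧ R₁ = R₂ ∧ ∀ i, 1 ≤ i → i ≤ n → E₁ i = E₂ i) :=
  coxian_seir_endemic_equilibrium_iff_general n hn μ γ β hμ hγ hβ lam p hlam hp R0 hR0
end

section
/- Let S, E_n, ..., E_1, I be real numbers and let E_n', ..., E_1', I' be real numbers satisfying the ODE relations E_n' = β̄·S·I − (λ_n+μ)·E_n, E_i' = p̄_i·λ_{i+1}·E_{i+1} − (λ_i+μ)·E_i for i = n−1,...,1, and I' = Σ_{i=0}^{n−1} p_i·λ_{i+1}·E_{i+1} − (γ+μ)·I. Then, with the weights w_j, the Lyapunov derivative satisfies the exact identity Σ_{j=1}^n w_j·E_j' + I' = w_n·β̄·S·I − (γ+μ)·I. -/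
/-- Exact identity for the derivative of the Lyapunov function
`V = Σ wⱼ Eⱼ + I` along the Coxian SEIR vector field:
`Σ wⱼ Eⱼ' + I' = wₙ β̄ S I − (γ+μ) I`. -/
theorem coxian_seir_lyapunov_derivative_identity
    (n : ℕ) (hn : 1 ≤ n) (μ γ β : ℝ) (hμ : 0 < μ) (hγ : 0 < γ) (hβ : 0 < β)
    (lam p : ℕ → ℝ) (hlam : ∀ i, 1 ≤ i → i ≤ n → 0 < lam i)
    (hp0 : p 0 = 1) (hp : ∀ i, 1 ≤ i → i ≤ n - 1 → 0 < p i ∧ p i < 1)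
    (w : ℕ → ℝ)
    (hw : ∀ j, w j = ∑ l ∈ Finset.Icc 1 j,
      (p (l - 1) * ∏ ξ ∈ Finset.Icc l (j - 1), (1 - p ξ)) *
        ∏ k ∈ Finset.Icc l j, lam k / (lam k + μ))
    (S I I' : ℝ) (E E' : ℕ → ℝ)
    (hEn : E' n = β * S * I - (lam n + μ) * E n)
    (hEi : ∀ i, 1 ≤ i → i ≤ n - 1 →
      E' i = (1 - p i) * lam (i + 1) * E (i + 1) - (lam i + μ) * E i)
    (hI : I' = (∑ i ∈ Finset.range n, p i * lam (i + 1) * E (i + 1)) - (γ + μ) * I) :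
    (∑ j ∈ Finset.Icc 1 n, w j * E' j) + I' = w n * β * S * I - (γ + μ) * I := by
  have hw0 : w 0 = 0 := by simp [hw]
  -- key recurrence for the weights
  have key : ∀ t : ℕ, t + 1 ≤ n →
      w (t + 1) * (lam (t + 1) + μ) = (p t + (1 - p t) * w t) * lam (t + 1) := by
    intro t ht
    have hlpos : 0 < lam (t + 1) + μ := by
      have := hlam (t + 1) (Nat.le_add_left 1 t) ht
      linarith
    have hstep : w (t + 1) = (1 - p t) * (lam (t + 1) / (lam (t + 1) + μ)) * w t
        + p t * (lam (t + 1) / (lam (t + 1) + μ)) := by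
      rw [hw (t + 1), hw t]
      rw [Finset.sum_Icc_succ_top (Nat.le_add_left 1 t)]
      simp only [Nat.add_sub_cancel]
      rw [Finset.mul_sum]
      congr 1
      · apply Finset.sum_congr rfl
        intro l hl
        obtain ⟨hl1, hl2⟩ := Finset.mem_Icc.mp hl
        obtain ⟨s, rfl⟩ : ∃ s, t = s + 1 :=
          ⟨t - 1, (Nat.succ_pred_eq_of_pos (by omega)).symm⟩
        rw [Finset.prod_Icc_succ_top (by omega : l ≤ s + 1),
          Finset.prod_Icc_succ_top (by omega : l ≤ s + 1 + 1)]
        simp only [Nat.add_sub_cancel]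
        ring
      · rw [show Finset.Icc (t + 1) t = ∅ from Finset.Icc_eq_empty (by omega)]
        rw [Finset.Icc_self, Finset.prod_singleton, Finset.prod_empty]
        ring
    rw [hstep]
    field_simp
    ring
  obtain ⟨m, rfl⟩ : ∃ m, n = m + 1 := ⟨n - 1, (Nat.succ_pred_eq_of_pos hn).symm⟩
  have hsum : ∑ j ∈ Finset.Icc 1 (m + 1), w j * E' j
      = ∑ i ∈ Finset.range (m + 1), w (i + 1) * E' (i + 1) := by
    rw [← Finset.Ico_add_one_right_eq_Icc, Finset.sum_Ico_eq_sum_range]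
    apply Finset.sum_congr (by norm_num)
    intro i _
    rw [Nat.add_comm 1 i]
  rw [hI, hsum]
  have main : ∑ i ∈ Finset.range (m + 1),
      (w (i + 1) * E' (i + 1) + p i * lam (i + 1) * E (i + 1))
      = w (m + 1) * β * S * I := by
    rw [Finset.sum_range_succ]
    have hmid : ∀ i ∈ Finset.range m,
        w (i + 1) * E' (i + 1) + p i * lam (i + 1) * E (i + 1)
          = (fun i => w i * (1 - p i) * lam (i + 1) * E (i + 1)) (i + 1)
            - (fun i => w i * (1 - p i) * lam (i + 1) * E (i + 1)) i := by
      intro i hi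
      have him : i < m := Finset.mem_range.mp hi
      rw [hEi (i + 1) (by omega) (by omega)]
      have hk := key i (by omega)
      simp only
      linear_combination (-E (i + 1)) * hk
    rw [Finset.sum_congr rfl hmid,
      Finset.sum_range_sub (fun i => w i * (1 - p i) * lam (i + 1) * E (i + 1)) m]
    have hk := key m le_rfl
    simp only [hw0, hEn]
    linear_combination (-E (m + 1)) * hk
  rw [Finset.sum_add_distrib] at main
  linarith
end

section
/- Let S, E_n, ..., E_1, I be real numbers with 0 ≤ S ≤ 1, E_i ≥ 0 for all i, and I ≥ 0, and let E_n', ..., E_1', I' satisfy the ODE relations E_n' = β̄·S·I − (λ_n+μ)·E_n, E_i' = p̄_i·λ_{i+1}·E_{i+1} − (λ_i+μ)·E_i for i = n−1,...,1, and I' = Σ_{i=0}^{n−1} p_i·λ_{i+1}·E_{i+1} − (γ+μ)·I. If R_0 ≤ 1, then Σ_{j=1}^n w_j·E_j' + I' ≤ (γ+μ)·(R_0 − 1)·I ≤ 0. -/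
/-- If `R0 ≤ 1`, then along the Coxian SEIR vector field the Lyapunov
derivative satisfies `Σ wⱼ Eⱼ' + I' ≤ (γ+μ)(R0 − 1) I ≤ 0`. -/
theorem coxian_seir_lyapunov_derivative_nonpos
    (n : ℕ) (hn : 1 ≤ n) (μ γ β : ℝ) (hμ : 0 < μ) (hγ : 0 < γ) (hβ : 0 < β)
    (lam p : ℕ → ℝ) (hlam : ∀ i, 1 ≤ i → i ≤ n → 0 < lam i)
    (hp0 : p 0 = 1) (hp : ∀ i, 1 ≤ i → i ≤ n - 1 → 0 < p i ∧ p i < 1)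
    (w : ℕ → ℝ)
    (hw : ∀ j, w j = ∑ l ∈ Finset.Icc 1 j,
      (p (l - 1) * ∏ ξ ∈ Finset.Icc l (j - 1), (1 - p ξ)) *
        ∏ k ∈ Finset.Icc l j, lam k / (lam k + μ))
    (R0 : ℝ)
    (hR0 : R0 = β / (γ + μ) * ∑ i ∈ Finset.range n,
      (p i * ∏ j ∈ Finset.Icc 1 (n - 1 - i), (1 - p (j + i))) *
        ∏ k ∈ Finset.Icc 1 (n - i), lam (n + 1 - k) / (lam (n + 1 - k) + μ))
    (S I I' : ℝ) (E E' : ℕ → ℝ)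
    (hS0 : 0 ≤ S) (hS1 : S ≤ 1) (hE : ∀ i, 1 ≤ i → i ≤ n → 0 ≤ E i) (hInn : 0 ≤ I)
    (hEn : E' n = β * S * I - (lam n + μ) * E n)
    (hEi : ∀ i, 1 ≤ i → i ≤ n - 1 →
      E' i = (1 - p i) * lam (i + 1) * E (i + 1) - (lam i + μ) * E i)
    (hI : I' = (∑ i ∈ Finset.range n, p i * lam (i + 1) * E (i + 1)) - (γ + μ) * I)
    (hR0le : R0 ≤ 1) :
    (∑ j ∈ Finset.Icc 1 n, w j * E' j) + I' ≤ (γ + μ) * (R0 - 1) * I ∧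
    (γ + μ) * (R0 - 1) * I ≤ 0 := by
  have hγμ : (0:ℝ) < γ + μ := by linarith
  have hlm : ∀ k, 1 ≤ k → k ≤ n → (0:ℝ) < lam k + μ := fun k h1 h2 => by
    have := hlam k h1 h2; linarith
  -- w 1
  have hw1 : w 1 = lam 1 / (lam 1 + μ) := by
    rw [hw]
    rw [Finset.Icc_self, Finset.sum_singleton]
    rw [show (1:ℕ) - 1 = 0 from rfl, Finset.Icc_eq_empty (by norm_num),
      Finset.prod_empty, hp0, Finset.Icc_self, Finset.prod_singleton]
    ring
  have hw1' : w 1 * (lam 1 + μ) = lam 1 := by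
    rw [hw1, div_mul_cancel₀]
    exact (hlm 1 le_rfl hn).ne'
  -- recurrence
  have hrec : ∀ j, 1 ≤ j → j ≤ n - 1 →
      w (j+1) = (p j + (1 - p j) * w j) * (lam (j+1) / (lam (j+1) + μ)) := by
    intro j hj1 hj2
    rw [hw (j+1), Finset.sum_Icc_succ_top (by omega : 1 ≤ j + 1)]
    have htop : (p (j+1-1) * ∏ ξ ∈ Finset.Icc (j+1) (j+1-1), (1 - p ξ)) *
        ∏ k ∈ Finset.Icc (j+1) (j+1), lam k / (lam k + μ)
        = p j * (lam (j+1) / (lam (j+1) + μ)) := by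
      rw [show j+1-1 = j from rfl, Finset.Icc_eq_empty (by omega),
        Finset.prod_empty, Finset.Icc_self, Finset.prod_singleton]
      ring
    rw [htop]
    have hrest : ∀ l ∈ Finset.Icc 1 j,
        (p (l-1) * ∏ ξ ∈ Finset.Icc l (j+1-1), (1 - p ξ)) *
          ∏ k ∈ Finset.Icc l (j+1), lam k / (lam k + μ)
        = ((p (l-1) * ∏ ξ ∈ Finset.Icc l (j-1), (1 - p ξ)) *
            ∏ k ∈ Finset.Icc l j, lam k / (lam k + μ)) *
            ((1 - p j) * (lam (j+1) / (lam (j+1) + μ))) := by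
      intro l hl
      rw [Finset.mem_Icc] at hl
      have e1 : j + 1 - 1 = (j-1) + 1 := by omega
      rw [e1, Finset.prod_Icc_succ_top (by omega : l ≤ (j-1)+1),
        show j - 1 + 1 = j from by omega,
        Finset.prod_Icc_succ_top (by omega : l ≤ j + 1)]
      ring
    rw [Finset.sum_congr rfl hrest, ← Finset.sum_mul, ← hw]
    ring
  have wrec' : ∀ j, 1 ≤ j → j ≤ n - 1 →
      w (j+1) * (lam (j+1) + μ) = (p j + (1 - p j) * w j) * lam (j+1) := by
    intro j hj1 hj2
    rw [hrec j hj1 hj2]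
    have hne : lam (j+1) + μ ≠ 0 := (hlm (j+1) (by omega) (by omega)).ne'
    field_simp
  -- w n equals the R0 sum
  have hsum : (∑ i ∈ Finset.range n,
      (p i * ∏ j ∈ Finset.Icc 1 (n - 1 - i), (1 - p (j + i))) *
        ∏ k ∈ Finset.Icc 1 (n - i), lam (n + 1 - k) / (lam (n + 1 - k) + μ)) = w n := by
    have hIccIco : ∀ a b c : ℕ, b + 1 = c → Finset.Icc a b = Finset.Ico a c := by
      intro a b c h
      rw [← h, Finset.Ico_add_one_right_eq_Icc]
    rw [hw, hIccIco 1 n (n+1) rfl, Finset.sum_Ico_eq_sum_range]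
    apply Finset.sum_congr (by congr 1 <;> omega)
    intro i hi
    rw [Finset.mem_range] at hi
    have e0 : 1 + i - 1 = i := by omega
    rw [e0]
    congr 1
    · congr 1
      rw [hIccIco (1+i) (n-1) n (by omega), hIccIco 1 (n-1-i) (n-i) (by omega),
        Finset.prod_Ico_eq_prod_range, Finset.prod_Ico_eq_prod_range]
      apply Finset.prod_congr (by congr 1 <;> omega)
      intro x _
      rw [show 1+i+x = 1+x+i from by omega]
    · rw [hIccIco (1+i) n (n+1) rfl, hIccIco 1 (n-i) (n-i+1) rfl,
        Finset.prod_Ico_eq_prod_range, Finset.prod_Ico_eq_prod_range]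
      have hm : n - i + 1 - 1 = n + 1 - (1 + i) := by omega
      rw [hm]
      rw [← Finset.prod_range_reflect (fun x => lam (1 + i + x) / (lam (1 + i + x) + μ))
        (n + 1 - (1 + i))]
      apply Finset.prod_congr rfl
      intro x hx
      rw [Finset.mem_range] at hx
      have : n + 1 - (1 + x) = 1 + i + (n + 1 - (1 + i) - 1 - x) := by omega
      rw [this]
  -- β * w n = (γ+μ) * R0
  have hwn : β * w n = (γ + μ) * R0 := by
    rw [hR0, hsum]
    field_simp
  -- R0 nonneg
  have hR0nn : 0 ≤ R0 := by
    rw [hR0]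
    apply mul_nonneg (div_nonneg hβ.le hγμ.le)
    apply Finset.sum_nonneg
    intro i hi
    rw [Finset.mem_range] at hi
    apply mul_nonneg
    · apply mul_nonneg
      · rcases Nat.eq_zero_or_pos i with h0 | h1
        · rw [h0, hp0]; norm_num
        · exact (hp i h1 (by omega)).1.le
      · apply Finset.prod_nonneg
        intro j hj
        rw [Finset.mem_Icc] at hj
        have := (hp (j + i) (by omega) (by omega)).2
        linarith
    · apply Finset.prod_nonneg
      intro k hk
      rw [Finset.mem_Icc] at hk
      exact div_nonneg (hlam (n+1-k) (by omega) (by omega)).le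
        (hlm (n+1-k) (by omega) (by omega)).le
  -- the key algebraic identity
  have hkey : (∑ j ∈ Finset.Icc 1 n, w j * E' j) + I'
      = β * w n * S * I - (γ + μ) * I := by
    have hconv : (∑ j ∈ Finset.Icc 1 n, w j * E' j)
        = ∑ j ∈ Finset.range n, w (j+1) * E' (j+1) := by
      rw [show Finset.Icc 1 n = Finset.Ico 1 (n+1) from (Finset.Ico_add_one_right_eq_Icc 1 n).symm,
        Finset.sum_Ico_eq_sum_range]
      apply Finset.sum_congr (by congr 1 <;> omega)
      intro i _
      rw [Nat.add_comm 1 i]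
    rw [hconv, hI]
    obtain ⟨m, rfl⟩ : ∃ m, n = m + 1 := ⟨n - 1, by omega⟩
    rw [Finset.sum_range_succ, Finset.sum_range_succ', hEn, hp0]
    have htel : ∑ j ∈ Finset.range m,
        (w (j+1) * E' (j+1) + p (j+1) * lam (j+1+1) * E (j+1+1))
        = w (m+1) * (lam (m+1) + μ) * E (m+1) - lam 1 * E 1 := by
      have hpt : ∀ j ∈ Finset.range m,
          w (j+1) * E' (j+1) + p (j+1) * lam (j+1+1) * E (j+1+1)
          = (fun j => w (j+1) * (lam (j+1) + μ) * E (j+1)) (j+1)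
            - (fun j => w (j+1) * (lam (j+1) + μ) * E (j+1)) j := by
        intro j hj
        rw [Finset.mem_range] at hj
        rw [hEi (j+1) (by omega) (by omega)]
        have hr := wrec' (j+1) (by omega) (by omega)
        simp only
        linear_combination (-(E (j+1+1))) * hr
      rw [Finset.sum_congr rfl hpt,
        Finset.sum_range_sub (fun j => w (j+1) * (lam (j+1) + μ) * E (j+1)) m]
      rw [hw1']
    have h2 : (∑ j ∈ Finset.range m, w (j+1) * E' (j+1))
        + ∑ i ∈ Finset.range m, p (i+1) * lam (i+1+1) * E (i+1+1)
        = w (m+1) * (lam (m+1) + μ) * E (m+1) - lam 1 * E 1 := by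
      rw [← Finset.sum_add_distrib]; exact htel
    simp only [zero_add]
    linear_combination h2
  constructor
  · rw [hkey]
    have he : β * w n * S * I = (γ + μ) * R0 * S * I := by
      linear_combination (S * I) * hwn
    have hle : (γ + μ) * R0 * S * I ≤ (γ + μ) * R0 * I := by
      nlinarith [mul_nonneg hγμ.le hR0nn, mul_nonneg hInn (sub_nonneg.mpr hS1)]
    nlinarith [he, hle]
  · nlinarith [mul_nonneg hγμ.le hInn]
end

section
/- Let Q be the n×n real upper bidiagonal Coxian transition rate matrix with entries Q_{k,k} = −λ_{n+1−k} for k = 1,...,n and Q_{k,k+1} = p̄_{n−k}·λ_{n+1−k} for k = 1,...,n−1 (all other entries zero), let p = (1, 0, ..., 0) be the 1×n row vector, and let q = −Q·1 where 1 is the all-ones column vector (so q = (p_{n−1}λ_n, p_{n−2}λ_{n−1}, ..., p_1λ_2, λ_1)^T). Then for every s > 0 the matrix sI − Q is invertible and p·(sI − Q)^{−1}·q = Σ_{i=0}^{n−1} [ a_i · Π_{j=1}^{n−i} λ_{n+1−j}/(s + λ_{n+1−j}) ], where a_i = p_i · Π_{j=1}^{n−1−i} p̄_{j+i}. -/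
open Matrix Finset

/-!
`sI - Q` is upper triangular with diagonal entries `s + λ > 0`, hence invertible, and the
system `(sI - Q) x = q` is solved by back substitution. Its solution `x_j` is the Laplace
transform of the absorption time started in row `j`; it obeys `x = λ/(s+λ) (p + p̄ x')`,
where `x'` is the next row, and unrolling this recursion from the last row upwards gives the
sum over the exit phase `i`. Finally `p = e₁` picks out the first row.
-/

theorem Finset.prod_Icc_one_sub_add {M : Type*} [CommMonoid M] (f : ℕ → M) (i k : ℕ) :
    ∏ j ∈ Icc 1 (k - i), f (j + i) = ∏ m ∈ Icc (i + 1) k, f m := by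
  refine prod_nbij' (· + i) (· - i) ?_ ?_ ?_ ?_ fun _ _ => rfl <;>
    intro a ha <;> simp only [mem_Icc] at ha ⊢ <;> omega

theorem Finset.prod_Icc_one_sub_reflect {M : Type*} [CommMonoid M] (f : ℕ → M) (i k : ℕ) :
    ∏ j ∈ Icc 1 (k - i), f (k + 1 - j) = ∏ m ∈ Icc (i + 1) k, f m := by
  refine prod_nbij' (k + 1 - ·) (k + 1 - ·) ?_ ?_ ?_ ?_ fun _ _ => rfl <;>
    intro a ha <;> simp only [mem_Icc] at ha ⊢ <;> omega

theorem Matrix.mulVec_apply_of_bidiagonal {R : Type*} [NonUnitalNonAssocSemiring R] {n : ℕ}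
    (A : Matrix (Fin n) (Fin n) R)
    (hA : ∀ j k : Fin n, (k : ℕ) ≠ j → (k : ℕ) ≠ j + 1 → A j k = 0) (v : Fin n → R) (j : Fin n) :
    (A *ᵥ v) j =
      A j j * v j + if h : (j : ℕ) + 1 < n then A j ⟨j + 1, h⟩ * v ⟨j + 1, h⟩ else 0 := by
  rw [mulVec, dotProduct]
  split_ifs with h
  · refine Fintype.sum_eq_add _ _ (by simp [Fin.ext_iff]) fun k hk => ?_
    rw [hA j k (fun e => hk.1 (Fin.ext e)) (fun e => hk.2 (Fin.ext e)), zero_mul]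
  · rw [add_zero]
    refine Fintype.sum_eq_single _ fun k hk => ?_
    rw [hA j k (fun e => hk (Fin.ext e)) (by omega), zero_mul]

section Coxian

variable {R : Type*}

def coxianMatrix [Ring R] (n : ℕ) (lam p : ℕ → R) : Matrix (Fin n) (Fin n) R :=
  of fun j k =>
    if (k : ℕ) = j then -lam (n - j)
    else if (k : ℕ) = j + 1 then (1 - p (n - 1 - j)) * lam (n - j) else 0

theorem coxianMatrix_isUpperTriangular [Ring R] (n : ℕ) (lam p : ℕ → R) :
    (coxianMatrix n lam p).IsUpperTriangular := fun j k (hkj : k < j) => by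
  simp only [coxianMatrix, of_apply]
  rw [if_neg (by omega), if_neg (by omega)]

theorem coxianMatrix_mulVec_apply [Ring R] (n : ℕ) (lam p : ℕ → R) (v : Fin n → R) (j : Fin n) :
    (coxianMatrix n lam p *ᵥ v) j = -lam (n - j) * v j +
      if h : (j : ℕ) + 1 < n then (1 - p (n - 1 - j)) * lam (n - j) * v ⟨j + 1, h⟩ else 0 := by
  rw [mulVec_apply_of_bidiagonal _ (fun j k h₀ h₁ => by simp [coxianMatrix, h₀, h₁])]
  simp [coxianMatrix]

theorem det_smul_one_sub_coxianMatrix [CommRing R] (n : ℕ) (lam p : ℕ → R) (s : R) :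
    (s • 1 - coxianMatrix n lam p).det = ∏ j : Fin n, (s + lam (n - j)) := by
  have hM : (s • 1 - coxianMatrix n lam p).IsUpperTriangular := by
    rw [smul_one_eq_diagonal]
    exact (blockTriangular_diagonal _).sub (coxianMatrix_isUpperTriangular n lam p)
  rw [det_of_isUpperTriangular hM]
  simp [coxianMatrix]

/-- `coxianTail a p t` is the Laplace transform of the absorption time started in the phase
with rate `lam (t + 1)`, when `a m = lam m / (s + lam m)`. -/
def coxianTail [Ring R] (a p : ℕ → R) : ℕ → R
  | 0 => a 1 * p 0
  | t + 1 => a (t + 2) * (p (t + 1) + (1 - p (t + 1)) * coxianTail a p t)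

theorem coxianTail_eq_sum [CommRing R] (a p : ℕ → R) (t : ℕ) :
    coxianTail a p t = ∑ r ∈ range (t + 1),
      p r * (∏ m ∈ Icc (r + 1) t, (1 - p m)) * ∏ m ∈ Icc (r + 1) (t + 1), a m := by
  induction t with
  | zero => simp [coxianTail, mul_comm]
  | succ t ih =>
    have hterm : ∀ r ∈ range (t + 1),
        p r * (∏ m ∈ Icc (r + 1) (t + 1), (1 - p m)) * ∏ m ∈ Icc (r + 1) (t + 2), a m =
          a (t + 2) * (1 - p (t + 1)) *
            (p r * (∏ m ∈ Icc (r + 1) t, (1 - p m)) * ∏ m ∈ Icc (r + 1) (t + 1), a m) := by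
      intro r hr
      rw [mem_range] at hr
      rw [prod_Icc_succ_top (by omega : r + 1 ≤ t + 1), prod_Icc_succ_top (by omega : r + 1 ≤ t + 2)]
      ring
    rw [sum_range_succ, sum_congr rfl hterm, ← mul_sum, ← ih, Icc_self,
      Icc_eq_empty (by omega : ¬t + 2 ≤ t + 1), prod_empty, prod_singleton, coxianTail]
    ring

theorem smul_one_sub_coxianMatrix_mulVec_coxianTail [Field R] {n : ℕ} {lam p : ℕ → R} {s : R}
    (hs : ∀ j : Fin n, s + lam (n - j) ≠ 0) (hp0 : p 0 = 1) :
    (s • 1 - coxianMatrix n lam p) *ᵥ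
        (fun j : Fin n => coxianTail (fun m => lam m / (s + lam m)) p (n - 1 - j)) =
      -(coxianMatrix n lam p *ᵥ fun _ => 1) := by
  ext j
  simp only [sub_mulVec, smul_mulVec, one_mulVec, Pi.sub_apply, Pi.smul_apply, Pi.neg_apply,
    coxianMatrix_mulVec_apply, smul_eq_mul, mul_one]
  split_ifs with h
  · obtain ⟨t, ht⟩ : ∃ t, n - 1 - (j : ℕ) = t + 1 := ⟨n - 2 - j, by omega⟩
    have hnj : n - (j : ℕ) = t + 2 := by omega
    have hst : s + lam (t + 2) ≠ 0 := hnj ▸ hs j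
    rw [show n - 1 - ((j : ℕ) + 1) = t by omega, ht, hnj, coxianTail]
    field_simp
    ring
  · have hnj : n - (j : ℕ) = 1 := by omega
    have hs1 : s + lam 1 ≠ 0 := hnj ▸ hs j
    rw [show n - 1 - (j : ℕ) = 0 by omega, hnj, coxianTail, hp0]
    field_simp
    ring

end Coxian

theorem coxian_laplace_transform_general
    (n : ℕ) (hn : 1 ≤ n)
    (lam p : ℕ → ℝ) (hlam : ∀ i, 1 ≤ i → i ≤ n → 0 < lam i)
    (hp0 : p 0 = 1)
    (Q : Matrix (Fin n) (Fin n) ℝ)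
    (hQ : ∀ j k : Fin n, Q j k =
      if (k : ℕ) = (j : ℕ) then -lam (n - (j : ℕ))
      else if (k : ℕ) = (j : ℕ) + 1 then (1 - p (n - 1 - (j : ℕ))) * lam (n - (j : ℕ))
      else 0)
    (pvec q : Fin n → ℝ)
    (hpvec : ∀ j : Fin n, pvec j = if (j : ℕ) = 0 then 1 else 0)
    (hq : q = -(Q *ᵥ fun _ => 1))
    (s : ℝ) (hs : 0 < s) :
    IsUnit (s • (1 : Matrix (Fin n) (Fin n) ℝ) - Q) ∧
    pvec ⬝ᵥ ((s • (1 : Matrix (Fin n) (Fin n) ℝ) - Q)⁻¹ *ᵥ q) =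
      ∑ i ∈ Finset.range n,
        (p i * ∏ j ∈ Finset.Icc 1 (n - 1 - i), (1 - p (j + i))) *
          ∏ j ∈ Finset.Icc 1 (n - i), lam (n + 1 - j) / (s + lam (n + 1 - j)) := by
  obtain rfl : Q = coxianMatrix n lam p := Matrix.ext hQ
  obtain rfl : pvec = Pi.single ⟨0, hn⟩ 1 := by
    ext j
    simp [hpvec, Pi.single_apply, Fin.ext_iff]
  subst hq
  have hsl : ∀ j : Fin n, s + lam (n - j) ≠ 0 := fun j =>
    (add_pos hs (hlam _ (by omega) (by omega))).ne'
  have hdet : IsUnit (s • 1 - coxianMatrix n lam p).det := by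
    rw [det_smul_one_sub_coxianMatrix]
    exact (prod_ne_zero_iff.2 fun j _ => hsl j).isUnit
  refine ⟨(isUnit_iff_isUnit_det _).2 hdet, ?_⟩
  let := invertibleOfIsUnitDet _ hdet
  rw [inv_mulVec_eq_vec (smul_one_sub_coxianMatrix_mulVec_coxianTail hsl hp0).symm,
    single_dotProduct, one_mul, Fin.val_mk, Nat.sub_zero, coxianTail_eq_sum, Nat.sub_add_cancel hn]
  refine sum_congr rfl fun i _ => ?_
  rw [prod_Icc_one_sub_add (fun m => 1 - p m), prod_Icc_one_sub_reflect (fun m => lam m / (s + lam m))]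

/-- Laplace transform of the Coxian density: for every `s > 0`, `sI − Q` is
invertible and `p (sI − Q)⁻¹ q = Σᵢ aᵢ Πⱼ λ_{n+1−j}/(s + λ_{n+1−j})`. -/
theorem coxian_laplace_transform
    (n : ℕ) (hn : 1 ≤ n)
    (lam p : ℕ → ℝ) (hlam : ∀ i, 1 ≤ i → i ≤ n → 0 < lam i)
    (hp0 : p 0 = 1) (hp : ∀ i, 1 ≤ i → i ≤ n - 1 → 0 < p i ∧ p i < 1)
    (Q : Matrix (Fin n) (Fin n) ℝ)
    (hQ : ∀ j k : Fin n, Q j k =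
      if (k : ℕ) = (j : ℕ) then -lam (n - (j : ℕ))
      else if (k : ℕ) = (j : ℕ) + 1 then (1 - p (n - 1 - (j : ℕ))) * lam (n - (j : ℕ))
      else 0)
    (pvec q : Fin n → ℝ)
    (hpvec : ∀ j : Fin n, pvec j = if (j : ℕ) = 0 then 1 else 0)
    (hq : q = -(Q *ᵥ fun _ => 1))
    (s : ℝ) (hs : 0 < s) :
    IsUnit (s • (1 : Matrix (Fin n) (Fin n) ℝ) - Q) ∧
    pvec ⬝ᵥ ((s • (1 : Matrix (Fin n) (Fin n) ℝ) - Q)⁻¹ *ᵥ q) =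
      ∑ i ∈ Finset.range n,
        (p i * ∏ j ∈ Finset.Icc 1 (n - 1 - i), (1 - p (j + i))) *
          ∏ j ∈ Finset.Icc 1 (n - i), lam (n + 1 - j) / (s + lam (n + 1 - j)) :=
  coxian_laplace_transform_general n hn lam p hlam hp0 Q hQ pvec q hpvec hq s hs
end

section
/- Consider the Coxian distributed SEIR model with time-dependent contact rate: differentiable functions S, E_n, ..., E_1, I, R : [0,∞) → ℝ satisfying S' = μ − β(t)·S·I − μ·S, E_n' = β(t)·S·I − (λ_n+μ)·E_n, E_i' = p̄_i·λ_{i+1}·E_{i+1} − (λ_i+μ)·E_i for i = n−1,...,1, I' = Σ_{i=0}^{n−1} p_i·λ_{i+1}·E_{i+1} − (γ+μ)·I, and R' = γ·I − μ·R, where β : [0,∞) → ℝ is continuous and nonnegative. If S(0) > 0, E_i(0) > 0 for every i, I(0) > 0, and R(0) > 0, then S(t) > 0, E_i(t) > 0 for every i, I(t) > 0, and R(t) > 0 for all t > 0. -/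
/-!
Continuous induction on `[0, ∞)`: positivity of all compartments at a time persists a little
beyond it by continuity, so it suffices that positivity on `[0, b)` forces positivity at `b`.
For `E_i`, `I` and `R` the equation has the form `f' = g - K f` with a source `g ≥ 0` on
`[0, b)`, so `f(t) e^{K t}` is nondecreasing there. For `S` the loss rate `β I + μ` need not
be bounded, but at a first zero of `S` the equation gives `S' = μ > 0`, which is impossible.
-/

open Set Filter Topology Real

theorem Ici_subset_of_continuous_induction {α : Type*} [ConditionallyCompleteLinearOrder α]
    [TopologicalSpace α] [OrderTopology α] [NoMaxOrder α] {a : α} {s : Set α}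
    (hstep : ∀ b, a ≤ b → Ico a b ⊆ s → b ∈ s)
    (hopen : ∀ x ∈ s ∩ Ici a, s ∈ 𝓝[>] x) :
    Ici a ⊆ s := by
  by_contra hfail
  obtain ⟨c, hc, hcs⟩ := not_subset.1 hfail
  set bad := Ici a \ s
  have hbdd : BddBelow bad := ⟨a, fun x hx => hx.1⟩
  have ha : a ≤ sInf bad := le_csInf ⟨c, hc, hcs⟩ fun x hx => hx.1
  have hinf : sInf bad ∈ s := hstep _ ha fun x hx => by_contra fun hxs =>
    hx.2.not_ge (csInf_le hbdd ⟨hx.1, hxs⟩)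
  obtain ⟨u, hu, hus⟩ := mem_nhdsGT_iff_exists_Ioo_subset.1 (hopen _ ⟨hinf, ha⟩)
  obtain ⟨x, hx, hxu⟩ := exists_lt_of_csInf_lt (s := bad) ⟨c, hc, hcs⟩ hu
  have hx_ne : sInf bad ≠ x := fun h => hx.2 (h ▸ hinf)
  exact hx.2 (hus ⟨(csInf_le hbdd hx).lt_of_ne hx_ne, hxu⟩)

theorem pos_of_hasDerivAt_sub_mul {f g : ℝ → ℝ} {K a b : ℝ} (hab : a ≤ b)
    (hf : ∀ t ∈ Icc a b, HasDerivAt f (g t - K * f t) t) (hg : ∀ t ∈ Ioo a b, 0 ≤ g t)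
    (ha : 0 < f a) : 0 < f b := by
  have hderiv : ∀ t ∈ Icc a b,
      HasDerivAt (fun t => f t * exp (K * t)) (g t * exp (K * t)) t := fun t ht =>
    ((hf t ht).mul ((hasDerivAt_id' t).const_mul K).exp).congr_deriv (by ring)
  have hmono : MonotoneOn (fun t => f t * exp (K * t)) (Icc a b) := by
    refine monotoneOn_of_hasDerivWithinAt_nonneg (convex_Icc a b)
      (fun t ht => (hderiv t ht).continuousAt.continuousWithinAt)
      (fun t ht => (hderiv t (interior_subset ht)).hasDerivWithinAt) fun t ht => ?_
    rw [interior_Icc] at ht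
    exact mul_nonneg (hg t ht) (exp_pos _).le
  have := hmono (left_mem_Icc.2 hab) (right_mem_Icc.2 hab) hab
  exact (mul_pos_iff_of_pos_right (exp_pos (K * b))).1 ((mul_pos ha (exp_pos _)).trans_le this)

theorem pos_of_forall_Ioo_pos_of_hasDerivAt {f : ℝ → ℝ} {a b d : ℝ} (hab : a < b)
    (hpos : ∀ t ∈ Ioo a b, 0 < f t) (hf : HasDerivAt f d b) (hd : f b = 0 → 0 < d) :
    0 < f b := by
  have hleft : ∀ᶠ t in 𝓝[<] b, 0 < f t := eventually_of_mem (Ioo_mem_nhdsLT hab) hpos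
  have hnonneg : 0 ≤ f b :=
    ge_of_tendsto (hf.continuousAt.tendsto.mono_left nhdsWithin_le_nhds)
      (hleft.mono fun _ h => h.le)
  refine hnonneg.lt_of_ne' fun hzero => (hd hzero).not_ge ?_
  refine le_of_tendsto (hasDerivAt_iff_tendsto_slope_left_right.1 hf).1 ?_
  filter_upwards [hleft, self_mem_nhdsWithin] with t ht htb
  rw [slope_def_field, hzero, sub_zero]
  exact div_nonpos_of_nonneg_of_nonpos ht.le (sub_neg.2 htb).le

theorem eventually_seir_pos {n : ℕ} {S I R : ℝ → ℝ} {E : ℕ → ℝ → ℝ} {t : ℝ}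
    (hS : ContinuousAt S t) (hE : ∀ i, 1 ≤ i → i ≤ n → ContinuousAt (E i) t)
    (hI : ContinuousAt I t) (hR : ContinuousAt R t)
    (hpos : 0 < S t ∧ (∀ i, 1 ≤ i → i ≤ n → 0 < E i t) ∧ 0 < I t ∧ 0 < R t) :
    ∀ᶠ s in 𝓝 t,
      0 < S s ∧ (∀ i, 1 ≤ i → i ≤ n → 0 < E i s) ∧ 0 < I s ∧ 0 < R s := by
  obtain ⟨hSt, hEt, hIt, hRt⟩ := hpos
  have hEs : ∀ᶠ s in 𝓝 t, ∀ i ∈ Icc 1 n, 0 < E i s :=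
    (eventually_all_finite (finite_Icc 1 n)).2 fun i hi =>
      (hE i hi.1 hi.2).eventually (lt_mem_nhds (hEt i hi.1 hi.2))
  filter_upwards [hS.eventually (lt_mem_nhds hSt), hEs, hI.eventually (lt_mem_nhds hIt),
    hR.eventually (lt_mem_nhds hRt)] with s hSs hEs hIs hRs
  exact ⟨hSs, fun i hi1 hi2 => hEs i ⟨hi1, hi2⟩, hIs, hRs⟩

theorem coxian_rates_nonneg {n : ℕ} {lam p : ℕ → ℝ}
    (hlam : ∀ i, 1 ≤ i → i ≤ n → 0 < lam i)
    (hp0 : p 0 = 1) (hp : ∀ i, 1 ≤ i → i ≤ n - 1 → 0 < p i ∧ p i < 1) :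
    (∀ i, 1 ≤ i → i ≤ n - 1 → 0 ≤ (1 - p i) * lam (i + 1)) ∧
      ∀ i < n, 0 ≤ p i * lam (i + 1) := by
  refine ⟨fun i hi1 hi2 => ?_, fun i hi => ?_⟩
  · exact mul_nonneg (sub_nonneg.2 (hp i hi1 hi2).2.le) (hlam (i + 1) (by omega) (by omega)).le
  · refine mul_nonneg ?_ (hlam (i + 1) (by omega) (by omega)).le
    rcases i with _ | i
    · exact hp0 ▸ zero_le_one
    · exact (hp (i + 1) (by omega) (by omega)).1.le

theorem coxian_seir_positivity_general
    (n : ℕ) (μ γ : ℝ) (hμ : 0 < μ) (hγ : 0 < γ)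
    (lam p : ℕ → ℝ) (hlam : ∀ i, 1 ≤ i → i ≤ n → 0 < lam i)
    (hp0 : p 0 = 1) (hp : ∀ i, 1 ≤ i → i ≤ n - 1 → 0 < p i ∧ p i < 1)
    (β : ℝ → ℝ) (hβ : ∀ t, 0 ≤ t → 0 ≤ β t)
    (S I R : ℝ → ℝ) (E : ℕ → ℝ → ℝ)
    (hS : ∀ t, 0 ≤ t → HasDerivAt S (μ - β t * S t * I t - μ * S t) t)
    (hEn : ∀ t, 0 ≤ t → HasDerivAt (E n) (β t * S t * I t - (lam n + μ) * E n t) t)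
    (hEi : ∀ i, 1 ≤ i → i ≤ n - 1 → ∀ t, 0 ≤ t →
      HasDerivAt (E i) ((1 - p i) * lam (i + 1) * E (i + 1) t - (lam i + μ) * E i t) t)
    (hI : ∀ t, 0 ≤ t → HasDerivAt I
      ((∑ i ∈ Finset.range n, p i * lam (i + 1) * E (i + 1) t) - (γ + μ) * I t) t)
    (hR : ∀ t, 0 ≤ t → HasDerivAt R (γ * I t - μ * R t) t)
    (hS0 : 0 < S 0) (hE0 : ∀ i, 1 ≤ i → i ≤ n → 0 < E i 0)
    (hI0 : 0 < I 0) (hRinit : 0 < R 0) :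
    ∀ t, 0 < t →
      0 < S t ∧ (∀ i, 1 ≤ i → i ≤ n → 0 < E i t) ∧ 0 < I t ∧ 0 < R t := by
  obtain ⟨hstage, hexit⟩ := coxian_rates_nonneg hlam hp0 hp
  have hE_cont : ∀ i, 1 ≤ i → i ≤ n → ∀ t, 0 ≤ t → ContinuousAt (E i) t := by
    intro i hi1 hi2 t ht
    rcases hi2.eq_or_lt with rfl | hlt
    exacts [(hEn t ht).continuousAt, (hEi i hi1 (by omega) t ht).continuousAt]
  let P : Set ℝ :=
    {t | 0 < S t ∧ (∀ i, 1 ≤ i → i ≤ n → 0 < E i t) ∧ 0 < I t ∧ 0 < R t}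
  suffices Ici 0 ⊆ P from fun t ht => this ht.le
  refine Ici_subset_of_continuous_induction (fun b hb hP => ?_) fun t ⟨hPt, ht⟩ =>
    nhdsWithin_le_nhds <| eventually_seir_pos (hS t ht).continuousAt (fun i hi1 hi2 =>
      hE_cont i hi1 hi2 t ht) (hI t ht).continuousAt (hR t ht).continuousAt hPt
  have hP' : ∀ t ∈ Ioo 0 b, t ∈ P := fun t ht => hP (Ioo_subset_Ico_self ht)
  refine ⟨?_, fun i hi1 hi2 => ?_, ?_, ?_⟩
  · rcases hb.eq_or_lt with rfl | hb
    · exact hS0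
    exact pos_of_forall_Ioo_pos_of_hasDerivAt hb (fun t ht => (hP' t ht).1) (hS b hb.le)
      fun h => by simpa [h] using hμ
  · rcases hi2.eq_or_lt with rfl | hlt
    · refine pos_of_hasDerivAt_sub_mul hb (fun t ht => hEn t ht.1) (fun t ht => ?_)
        (hE0 i hi1 le_rfl)
      obtain ⟨hSt, -, hIt, -⟩ := hP' t ht
      exact mul_nonneg (mul_nonneg (hβ t ht.1.le) hSt.le) hIt.le
    · exact pos_of_hasDerivAt_sub_mul hb (fun t ht => hEi i hi1 (by omega) t ht.1)
        (fun t ht => mul_nonneg (hstage i hi1 (by omega))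
          ((hP' t ht).2.1 (i + 1) (by omega) (by omega)).le) (hE0 i hi1 hi2)
  · exact pos_of_hasDerivAt_sub_mul hb (fun t ht => hI t ht.1)
      (fun t ht => Finset.sum_nonneg fun i hi => mul_nonneg (hexit i (Finset.mem_range.1 hi))
        ((hP' t ht).2.1 (i + 1) (by omega) (Finset.mem_range.1 hi)).le) hI0
  · exact pos_of_hasDerivAt_sub_mul hb (fun t ht => hR t ht.1)
      (fun t ht => mul_nonneg hγ.le (hP' t ht).2.2.1.le) hRinit

/-- Positivity preservation for the Coxian distributed SEIR model with
time-dependent contact rate: strictly positive initial data stay strictly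
positive for all `t > 0`. -/
theorem coxian_seir_positivity
    (n : ℕ) (hn : 1 ≤ n) (μ γ : ℝ) (hμ : 0 < μ) (hγ : 0 < γ)
    (lam p : ℕ → ℝ) (hlam : ∀ i, 1 ≤ i → i ≤ n → 0 < lam i)
    (hp0 : p 0 = 1) (hp : ∀ i, 1 ≤ i → i ≤ n - 1 → 0 < p i ∧ p i < 1)
    (β : ℝ → ℝ) (hβc : ContinuousOn β (Set.Ici 0)) (hβ : ∀ t, 0 ≤ t → 0 ≤ β t)
    (S I R : ℝ → ℝ) (E : ℕ → ℝ → ℝ)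
    (hS : ∀ t, 0 ≤ t → HasDerivAt S (μ - β t * S t * I t - μ * S t) t)
    (hEn : ∀ t, 0 ≤ t → HasDerivAt (E n) (β t * S t * I t - (lam n + μ) * E n t) t)
    (hEi : ∀ i, 1 ≤ i → i ≤ n - 1 → ∀ t, 0 ≤ t →
      HasDerivAt (E i) ((1 - p i) * lam (i + 1) * E (i + 1) t - (lam i + μ) * E i t) t)
    (hI : ∀ t, 0 ≤ t → HasDerivAt I
      ((∑ i ∈ Finset.range n, p i * lam (i + 1) * E (i + 1) t) - (γ + μ) * I t) t)
    (hR : ∀ t, 0 ≤ t → HasDerivAt R (γ * I t - μ * R t) t)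
    (hS0 : 0 < S 0) (hE0 : ∀ i, 1 ≤ i → i ≤ n → 0 < E i 0)
    (hI0 : 0 < I 0) (hRinit : 0 < R 0) :
    ∀ t, 0 < t →
      0 < S t ∧ (∀ i, 1 ≤ i → i ≤ n → 0 < E i t) ∧ 0 < I t ∧ 0 < R t :=
  coxian_seir_positivity_general n μ γ hμ hγ lam p hlam hp0 hp β hβ S I R E hS hEn hEi hI hR hS0 hE0
    hI0 hRinit
end

section
/- Let S*, E_n*, ..., E_1*, I* be real numbers satisfying the equilibrium relations μ·(1 − S*) = β̄·S*·I*, β̄·S*·I* = (λ_n+μ)·E_n*, E_i* = (1/(λ_i+μ))·p̄_i·λ_{i+1}·E_{i+1}* for i = n−1,...,1, and I* = (1/(γ+μ))·Σ_{i=0}^{n−1} p_i·λ_{i+1}·E_{i+1}*. Then I* = (μ/β̄)·(1 − S*)·R_0; moreover, if additionally S* ≠ 1, then I* = (μ/β̄)·(R_0 − 1) and S* = 1/R_0. -/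
/-!
Unrolling the chain of exposed stages from stage `n` down gives
`λ_{i+1} E_{i+1} = (λ_n + μ) E_n · w_i`, where `w_i` is the `i`-th summand of `R₀`. Since
`(λ_n + μ) E_n = β̄ S* I* = μ (1 - S*)`, the inflow into `I` is `μ (1 - S*) Σ w_i`, which is
`I* = (μ/β̄)(1 - S*) R₀`. Substituting this back into `μ (1 - S*) = β̄ S* I*` and cancelling
`μ (1 - S*) ≠ 0` leaves `S* R₀ = 1`.
-/

open Finset

theorem eq_prod_Ico_mul_of_forall_eq_mul {M : Type*} [CommMonoid M] {f a : ℕ → M} {m n : ℕ}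
    (hmn : m ≤ n) (h : ∀ i, m ≤ i → i < n → f i = a i * f (i + 1)) :
    f m = (∏ i ∈ Ico m n, a i) * f n := by
  induction n, hmn using Nat.le_induction with
  | base => simp
  | succ n hmn ih =>
    rw [prod_Ico_succ_top hmn, ih fun i hmi hin => h i hmi (by omega), h n hmn (by omega),
      mul_assoc]

theorem prod_Icc_one_add_eq_prod_Ico {M : Type*} [CommMonoid M] (f : ℕ → M) (n i : ℕ) :
    ∏ j ∈ Icc 1 (n - 1 - i), f (j + i) = ∏ j ∈ Ico (i + 1) n, f j := by
  refine prod_nbij' (· + i) (· - i) ?_ ?_ ?_ ?_ fun _ _ => rfl <;>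
    intro j hj <;> simp only [mem_Icc, mem_Ico] at * <;>
    omega

theorem prod_Icc_one_reflect {M : Type*} [CommMonoid M] (f : ℕ → M) (n i : ℕ) :
    ∏ k ∈ Icc 1 (n - i), f (n + 1 - k) = ∏ k ∈ Icc (i + 1) n, f k := by
  refine prod_nbij' (n + 1 - ·) (n + 1 - ·) ?_ ?_ ?_ ?_ fun _ _ => rfl <;>
    intro j hj <;> simp only [mem_Icc] at * <;>
    omega

/-- The summand of `R₀`: the probability that an individual entering the exposed chain at stage
`n` survives down to stage `i + 1` and leaves it into the infectious class. -/
noncomputable def coxianWeight (μ : ℝ) (lam p : ℕ → ℝ) (n i : ℕ) : ℝ :=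
  (p i * ∏ j ∈ Icc 1 (n - 1 - i), (1 - p (j + i))) *
    ∏ k ∈ Icc 1 (n - i), lam (n + 1 - k) / (lam (n + 1 - k) + μ)

theorem coxian_outflow_eq (n : ℕ) (μ : ℝ) (lam p E : ℕ → ℝ) (hn : lam n + μ ≠ 0)
    (hstage : ∀ i, 1 ≤ i → i ≤ n - 1 →
      E i = 1 / (lam i + μ) * ((1 - p i) * lam (i + 1) * E (i + 1)))
    {i : ℕ} (hi : i < n) :
    p i * lam (i + 1) * E (i + 1) = (lam n + μ) * E n * coxianWeight μ lam p n i := by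
  have hchain : lam (i + 1) * E (i + 1) =
      (∏ j ∈ Ico (i + 1) n, ((1 - p j) * (lam j / (lam j + μ)))) * (lam n * E n) :=
    eq_prod_Ico_mul_of_forall_eq_mul (f := fun j => lam j * E j) hi fun j hj hjn => by
      rw [hstage j (by omega) (by omega)]
      ring
  have hlast : lam n * E n = lam n / (lam n + μ) * ((lam n + μ) * E n) := by
    field_simp
  rw [coxianWeight, prod_Icc_one_add_eq_prod_Ico (fun j => 1 - p j),
    prod_Icc_one_reflect (fun k => lam k / (lam k + μ)),
    ← Ico_add_one_right_eq_Icc, prod_Ico_succ_top hi, mul_assoc (p i), hchain, hlast,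
    prod_mul_distrib]
  ring

theorem susceptible_mul_eq_one {μ β S I R0 : ℝ} (hμ : μ ≠ 0) (hβ : β ≠ 0) (hS : S ≠ 1)
    (h1 : μ * (1 - S) = β * S * I) (hI : I = μ / β * (1 - S) * R0) : S * R0 = 1 := by
  have hμS : μ * (1 - S) ≠ 0 := mul_ne_zero hμ (sub_ne_zero.mpr hS.symm)
  refine mul_left_cancel₀ hμS ?_
  calc μ * (1 - S) * (S * R0) = β * S * (μ / β * (1 - S) * R0) := by field_simp
    _ = μ * (1 - S) * 1 := by rw [← hI, ← h1, mul_one]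

theorem coxian_seir_equilibrium_infectious_formula_general
    (n : ℕ) (μ γ β : ℝ) (hμ : 0 < μ) (hβ : 0 < β)
    (lam p : ℕ → ℝ) (hlam : ∀ i, 1 ≤ i → i ≤ n → 0 < lam i)
    (R0 : ℝ)
    (hR0 : R0 = β / (γ + μ) * ∑ i ∈ Finset.range n,
      (p i * ∏ j ∈ Finset.Icc 1 (n - 1 - i), (1 - p (j + i))) *
        ∏ k ∈ Finset.Icc 1 (n - i), lam (n + 1 - k) / (lam (n + 1 - k) + μ))
    (S Istar : ℝ) (E : ℕ → ℝ)
    (h1 : μ * (1 - S) = β * S * Istar)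
    (h2 : β * S * Istar = (lam n + μ) * E n)
    (h3 : ∀ i, 1 ≤ i → i ≤ n - 1 →
      E i = 1 / (lam i + μ) * ((1 - p i) * lam (i + 1) * E (i + 1)))
    (h4 : Istar = 1 / (γ + μ) * ∑ i ∈ Finset.range n, p i * lam (i + 1) * E (i + 1)) :
    Istar = μ / β * (1 - S) * R0 ∧
    (S ≠ 1 → Istar = μ / β * (R0 - 1) ∧ S = 1 / R0) := by
  have hsum : ∑ i ∈ range n, p i * lam (i + 1) * E (i + 1) =
      μ * (1 - S) * ∑ i ∈ range n, coxianWeight μ lam p n i := by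
    rw [h1, h2, mul_sum]
    refine sum_congr rfl fun i hi => ?_
    have hin := mem_range.mp hi
    have hlamn := hlam n (by omega) le_rfl
    exact coxian_outflow_eq n μ lam p E (by positivity) h3 hin
  have hR0' : R0 = β / (γ + μ) * ∑ i ∈ range n, coxianWeight μ lam p n i := hR0
  have hβμ : μ / β * β = μ := div_mul_cancel₀ μ hβ.ne'
  have hmain : Istar = μ / β * (1 - S) * R0 := by
    rw [h4, hsum, hR0']
    linear_combination (-(1 - S) / (γ + μ) * ∑ i ∈ range n, coxianWeight μ lam p n i) * hβμ
  refine ⟨hmain, fun hS => ?_⟩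
  have hSR := susceptible_mul_eq_one hμ.ne' hβ.ne' hS h1 hmain
  exact ⟨by linear_combination hmain - μ / β * hSR, eq_one_div_of_mul_eq_one_left hSR⟩

/-- At equilibrium, `I* = (μ/β̄)(1 − S*) R0`; moreover, if `S* ≠ 1`, then
`I* = (μ/β̄)(R0 − 1)` and `S* = 1/R0`. -/
theorem coxian_seir_equilibrium_infectious_formula
    (n : ℕ) (hn : 1 ≤ n) (μ γ β : ℝ) (hμ : 0 < μ) (hγ : 0 < γ) (hβ : 0 < β)
    (lam p : ℕ → ℝ) (hlam : ∀ i, 1 ≤ i → i ≤ n → 0 < lam i)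
    (hp0 : p 0 = 1) (hp : ∀ i, 1 ≤ i → i ≤ n - 1 → 0 < p i ∧ p i < 1)
    (R0 : ℝ)
    (hR0 : R0 = β / (γ + μ) * ∑ i ∈ Finset.range n,
      (p i * ∏ j ∈ Finset.Icc 1 (n - 1 - i), (1 - p (j + i))) *
        ∏ k ∈ Finset.Icc 1 (n - i), lam (n + 1 - k) / (lam (n + 1 - k) + μ))
    (S Istar : ℝ) (E : ℕ → ℝ)
    (h1 : μ * (1 - S) = β * S * Istar)
    (h2 : β * S * Istar = (lam n + μ) * E n)
    (h3 : ∀ i, 1 ≤ i → i ≤ n - 1 →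
      E i = 1 / (lam i + μ) * ((1 - p i) * lam (i + 1) * E (i + 1)))
    (h4 : Istar = 1 / (γ + μ) * ∑ i ∈ Finset.range n, p i * lam (i + 1) * E (i + 1)) :
    Istar = μ / β * (1 - S) * R0 ∧
    (S ≠ 1 → Istar = μ / β * (R0 - 1) ∧ S = 1 / R0) :=
  coxian_seir_equilibrium_infectious_formula_general n μ γ β hμ hβ lam p hlam R0 hR0 S Istar E h1 h2
    h3 h4
end
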